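/- arXiv:0907.0299 — 3 statements merged into one kernel-verified Lean document; each statement's English description precedes it below -/
import Mathlib

section
/- Let n ≥ 2 and g_1,…,g_n ∈ ℝ. Define Q : ℝ^n × ℝ^{n−1} → ℝ by Q(z,x) = exp(−(g_1 e^{z_1} + Σ_{i=1}^{n−1} (e^{x_i − z_i} + g_{i+1} e^{z_{i+1} − x_i}))). Then for all (z,x): (−(1/2) Σ_{i=1}^n ∂²/∂z_i² − (g_1/2) e^{z_1} + (g_1²/2) e^{2z_1} + Σ_{i=1}^{n−1} g_{i+1} e^{z_{i+1}−z_i}) Q = (−(1/2) Σ_{i=1}^{n−1} ∂²/∂x_i² + g_1 e^{x_1} + Σ_{i=1}^{n−2} g_{i+1} e^{x_{i+1}−x_i}) Q. -/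
/-!
Write `Q = exp (-S)`. In each coordinate `y` the exponent `S` has the form
`A + B e^(y - u) + C e^(v - y)`, so `∂²_y Q = ((∂_y S)² - ∂_y² S) Q` with `∂_y² S = B e^(y - u) + C e^(v - y)`.
In the Toda variables `a_i = e^(x_i - z_i)`, `b_i = g_(i+1) e^(z_(i+1) - x_i)`, `c = g_1 e^(z_1)` one has
`∂_(z_k) S = b_(k-1) - a_k` (with `b_0 = c`, `a_n = 0`) and `∂_(x_k) S = a_k - b_k`, while the potentials
are `a_i b_i`, `c a_1`, `a_(i+1) b_i` and `c²`. Both sides divided by `Q` are then polynomials in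
`a, b, c` whose difference telescopes in `b_i² - b_i`.
-/

/-- Second partial derivative of `f` along the `i`-th coordinate at the point `p`. -/
noncomputable def pd2 (f : (ℕ → ℝ) → ℝ) (i : ℕ) (p : ℕ → ℝ) : ℝ :=
  deriv (deriv (fun t => f (Function.update p i t))) (p i)

open Real Finset

theorem deriv_deriv_exp_neg {φ φ' φ'' : ℝ → ℝ} (hφ : ∀ t, HasDerivAt φ (φ' t) t)
    (hφ' : ∀ t, HasDerivAt φ' (φ'' t) t) (t : ℝ) :
    deriv (deriv fun s => exp (-φ s)) t = (φ' t ^ 2 - φ'' t) * exp (-φ t) := by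
  have hexp : ∀ s, HasDerivAt (fun s => exp (-φ s)) (exp (-φ s) * -φ' s) s :=
    fun s => (hφ s).neg.exp
  have hexp' : HasDerivAt (fun s => exp (-φ s) * -φ' s)
      (exp (-φ t) * -φ' t * -φ' t + exp (-φ t) * -φ'' t) t :=
    (hexp t).mul (hφ' t).neg
  rw [funext fun s => (hexp s).deriv, hexp'.deriv]
  ring

theorem hasDerivAt_mul_exp_sub_add_mul_exp_sub (B C u v t : ℝ) :
    HasDerivAt (fun s => B * exp (s - u) + C * exp (v - s))
      (B * exp (t - u) - C * exp (v - t)) t := by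
  have h1 := ((hasDerivAt_id t).sub_const u).exp.const_mul B
  have h2 := ((hasDerivAt_id t).const_sub v).exp.const_mul C
  have h : HasDerivAt (fun s => B * exp (s - u) + C * exp (v - s))
      (B * (exp (t - u) * 1) + C * (exp (v - t) * -1)) t := h1.add h2
  exact h.congr_deriv (by ring)

theorem deriv_deriv_exp_neg_add_mul_exp_sub_add_mul_exp_sub (A B C u v t : ℝ) :
    deriv (deriv fun s => exp (-(A + (B * exp (s - u) + C * exp (v - s))))) t
      = ((B * exp (t - u) - C * exp (v - t)) ^ 2 - (B * exp (t - u) + C * exp (v - t)))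
        * exp (-(A + (B * exp (t - u) + C * exp (v - t)))) := by
  refine deriv_deriv_exp_neg (φ'' := fun t => B * exp (t - u) + C * exp (v - t))
    (fun t => (hasDerivAt_mul_exp_sub_add_mul_exp_sub B C u v t).const_add A) (fun t => ?_) t
  convert hasDerivAt_mul_exp_sub_add_mul_exp_sub B (-C) u v t using 1
  · funext s; ring
  · ring

section SeparableExpSum

variable (s : Finset ℕ) (A : ℝ) (B C u v : ℕ → ℝ)

noncomputable def separableExpSum (p : ℕ → ℝ) : ℝ :=
  A + ∑ i ∈ s, (B i * exp (p i - u i) + C i * exp (v i - p i))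

variable {s}

theorem separableExpSum_update {k : ℕ} (hk : k ∈ s) (p : ℕ → ℝ) (t : ℝ) :
    separableExpSum s A B C u v (Function.update p k t)
      = (A + ∑ i ∈ s.erase k, (B i * exp (p i - u i) + C i * exp (v i - p i)))
        + (B k * exp (t - u k) + C k * exp (v k - t)) := by
  rw [separableExpSum, ← add_sum_erase s _ hk, Function.update_self]
  have : ∀ i ∈ s.erase k, Function.update p k t i = p i :=
    fun i hi => Function.update_of_ne (ne_of_mem_erase hi) t p
  rw [sum_congr rfl fun i hi => by rw [this i hi]]
  ring

theorem pd2_exp_neg_separableExpSum {k : ℕ} (hk : k ∈ s) (p : ℕ → ℝ) :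
    pd2 (fun p => exp (-separableExpSum s A B C u v p)) k p
      = ((B k * exp (p k - u k) - C k * exp (v k - p k)) ^ 2
          - (B k * exp (p k - u k) + C k * exp (v k - p k)))
        * exp (-separableExpSum s A B C u v p) := by
  have h := separableExpSum_update A B C u v hk p
  rw [pd2]
  simp only [h, deriv_deriv_exp_neg_add_mul_exp_sub_add_mul_exp_sub]
  rw [← h, Function.update_eq_self]

theorem sum_pd2_exp_neg_separableExpSum {f : (ℕ → ℝ) → ℝ}
    (hf : ∀ p, f p = exp (-separableExpSum s A B C u v p)) (p : ℕ → ℝ) :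
    ∑ k ∈ s, pd2 f k p
      = (∑ k ∈ s, ((B k * exp (p k - u k) - C k * exp (v k - p k)) ^ 2
          - (B k * exp (p k - u k) + C k * exp (v k - p k)))) * f p := by
  obtain rfl : f = fun p => exp (-separableExpSum s A B C u v p) := funext hf
  rw [sum_mul]
  exact sum_congr rfl fun k hk => pd2_exp_neg_separableExpSum A B C u v hk p

end SeparableExpSum

theorem sum_Icc_one_eq_sum_range {M : Type*} [AddCommMonoid M] (f : ℕ → M) (N : ℕ) :
    ∑ i ∈ Icc 1 N, f i = ∑ i ∈ range N, f (i + 1) := by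
  rw [← Ico_add_one_right_eq_Icc, sum_Ico_eq_sum_range]
  simp [add_comm]

/-- `β = (c, b₁, …, b_{m+1})` and `α = (a₁, …, a_{m+1}, 0)` on the indices `1, …, m + 2`. -/
def IsShiftOf (m : ℕ) (c : ℝ) (a b β α : ℕ → ℝ) : Prop :=
  β 1 = c ∧ (∀ i ∈ Icc 1 (m + 1), β (i + 1) = b i) ∧ (∀ i ∈ Icc 1 (m + 1), α i = a i) ∧
    α (m + 2) = 0

section IsShiftOf

variable {m : ℕ} {c : ℝ} {a b β α : ℕ → ℝ}

theorem IsShiftOf.sum_Icc_eq (h : IsShiftOf m c a b β α) (Ψ : ℝ → ℝ → ℝ) :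
    ∑ k ∈ Icc 1 (m + 2), Ψ (β k) (α k)
      = Ψ c (a 1) + ∑ i ∈ range m, Ψ (b (i + 1)) (a (i + 2)) + Ψ (b (m + 1)) 0 := by
  obtain ⟨hβ_one, hβ_succ, hα, hα_top⟩ := h
  have hmem : ∀ {i}, 1 ≤ i → i ≤ m + 1 → i ∈ Icc 1 (m + 1) := fun h1 h2 => mem_Icc.2 ⟨h1, h2⟩
  have hmid : ∑ i ∈ range m, Ψ (β (i + 1 + 1)) (α (i + 1 + 1))
      = ∑ i ∈ range m, Ψ (b (i + 1)) (a (i + 2)) := by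
    refine sum_congr rfl fun i hi => ?_
    have hi := mem_range.1 hi
    rw [hβ_succ (i + 1) (hmem (by omega) (by omega)), hα (i + 2) (hmem (by omega) (by omega))]
  rw [sum_Icc_one_eq_sum_range, sum_range_succ, sum_range_succ', hmid, zero_add, hβ_one,
    hα 1 (hmem le_rfl (by omega)), hβ_succ (m + 1) (hmem (by omega) le_rfl), hα_top]
  ring

theorem IsShiftOf.sum_Icc_add (h : IsShiftOf m c a b β α) :
    ∑ k ∈ Icc 1 (m + 2), (β k + α k) = c + ∑ i ∈ Icc 1 (m + 1), (a i + b i) := by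
  rw [h.sum_Icc_eq (· + ·), sum_Icc_one_eq_sum_range, sum_add_distrib, sum_add_distrib,
    sum_range_succ' (fun i => a (i + 1)), sum_range_succ (fun i => b (i + 1))]
  ring

theorem IsShiftOf.toda_identity (h : IsShiftOf m c a b β α) :
    -(1 / 2) * ∑ k ∈ Icc 1 (m + 2), ((β k - α k) ^ 2 - (β k + α k))
        + (-(c / 2) + c ^ 2 / 2 + ∑ i ∈ Icc 1 (m + 1), a i * b i)
      = -(1 / 2) * ∑ k ∈ Icc 1 (m + 1), ((a k - b k) ^ 2 - (a k + b k))
        + (c * a 1 + ∑ i ∈ Icc 1 m, a (i + 1) * b i) := by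
  rw [h.sum_Icc_eq fun p q => (p - q) ^ 2 - (p + q)]
  simp only [sum_Icc_one_eq_sum_range, sum_range_succ' _ m, zero_add, Nat.add_assoc,
    Nat.reduceAdd]
  have htelescope : ∑ i ∈ range m, ((b (i + 2) ^ 2 - b (i + 2)) - (b (i + 1) ^ 2 - b (i + 1)))
      = (b (m + 1) ^ 2 - b (m + 1)) - (b 1 ^ 2 - b 1) :=
    sum_range_sub (fun j => b (j + 1) ^ 2 - b (j + 1)) m
  have hterms : ∑ i ∈ range m, ((a (i + 2) - b (i + 2)) ^ 2 - (a (i + 2) + b (i + 2)))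
      - ∑ i ∈ range m, ((b (i + 1) - a (i + 2)) ^ 2 - (b (i + 1) + a (i + 2)))
      + 2 * ∑ i ∈ range m, a (i + 2) * b (i + 2) - 2 * ∑ i ∈ range m, a (i + 2) * b (i + 1)
      = ∑ i ∈ range m, ((b (i + 2) ^ 2 - b (i + 2)) - (b (i + 1) ^ 2 - b (i + 1))) := by
    simp only [mul_sum, ← sum_sub_distrib, ← sum_add_distrib]
    exact sum_congr rfl fun i _ => by ring
  linear_combination (1 / 2) * hterms + (1 / 2) * htelescope

end IsShiftOf

/-- Along `z_k` the exponent of `Q` is `g_k e^(z_k - x_(k-1)) + [k ≤ m + 1] e^(x_k - z_k)`,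
with `x_0` read as `0`. -/
theorem isShiftOf_bcToda (m : ℕ) (g x w : ℕ → ℝ) :
    IsShiftOf m (g 1 * exp (w 1)) (fun i => exp (x i - w i))
      (fun i => g (i + 1) * exp (w (i + 1) - x i))
      (fun k => g k * exp (w k - Function.update (fun k => x (k - 1)) 1 0 k))
      (fun k => (Set.Iic (m + 1)).indicator 1 k * exp (x k - w k)) := by
  refine ⟨by simp, fun i hi => ?_, fun i hi => ?_, by simp⟩
  · have : i + 1 ≠ 1 := by simp at hi; omega
    simp [Function.update_of_ne this]
  · simp [Set.indicator_of_mem (Set.mem_Iic.2 (mem_Icc.1 hi).2)]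

/-- The kernel `Q(z,x) = exp(−(g_1 e^{z_1} + Σ_{i=1}^{n−1}(e^{x_i−z_i} + g_{i+1} e^{z_{i+1}−x_i})))`
intertwines the quadratic Hamiltonians of the `BC*_n` and `B_{n−1}` Toda chains. -/
theorem stmt_2 (n : ℕ) (hn : 2 ≤ n) (g : ℕ → ℝ) :
    let Q : (ℕ → ℝ) → (ℕ → ℝ) → ℝ := fun z x =>
      Real.exp (-(g 1 * Real.exp (z 1) + ∑ i ∈ Finset.Icc 1 (n - 1),
        (Real.exp (x i - z i) + g (i + 1) * Real.exp (z (i + 1) - x i))))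
    ∀ z x : ℕ → ℝ,
      -(1 / 2) * (∑ i ∈ Finset.Icc 1 n, pd2 (fun z' => Q z' x) i z)
          + (-(g 1 / 2) * Real.exp (z 1) + g 1 ^ 2 / 2 * Real.exp (2 * z 1)
              + ∑ i ∈ Finset.Icc 1 (n - 1), g (i + 1) * Real.exp (z (i + 1) - z i)) * Q z x
        = -(1 / 2) * (∑ i ∈ Finset.Icc 1 (n - 1), pd2 (fun x' => Q z x') i x)
          + (g 1 * Real.exp (x 1)
              + ∑ i ∈ Finset.Icc 1 (n - 2), g (i + 1) * Real.exp (x (i + 1) - x i)) * Q z x := by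
  intro Q z x
  obtain ⟨m, rfl⟩ : ∃ m, n = m + 2 := ⟨n - 2, by omega⟩
  have hQz : ∀ z', Q z' x = exp (-separableExpSum (Icc 1 (m + 2)) 0 g
      ((Set.Iic (m + 1)).indicator 1) (Function.update (fun k => x (k - 1)) 1 0) x z') := by
    intro z'
    rw [separableExpSum, (isShiftOf_bcToda m g x z').sum_Icc_add, zero_add]
    rfl
  have hQx : ∀ x', Q z x' = exp (-separableExpSum (Icc 1 (m + 1)) (g 1 * exp (z 1)) 1
      (fun i => g (i + 1)) z (fun i => z (i + 1)) x') := by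
    intro x'
    simp only [Q, separableExpSum, Pi.one_apply, one_mul]
    rfl
  rw [show m + 2 - 1 = m + 1 from rfl, show m + 2 - 2 = m from rfl,
    sum_pd2_exp_neg_separableExpSum _ _ _ _ _ hQz, sum_pd2_exp_neg_separableExpSum _ _ _ _ _ hQx]
  have hVz : ∑ i ∈ Icc 1 (m + 1), g (i + 1) * exp (z (i + 1) - z i)
      = ∑ i ∈ Icc 1 (m + 1), exp (x i - z i) * (g (i + 1) * exp (z (i + 1) - x i)) :=
    sum_congr rfl fun i _ => by rw [mul_left_comm, ← exp_add]; ring_nf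
  have hVx : ∑ i ∈ Icc 1 m, g (i + 1) * exp (x (i + 1) - x i)
      = ∑ i ∈ Icc 1 m, exp (x (i + 1) - z (i + 1)) * (g (i + 1) * exp (z (i + 1) - x i)) :=
    sum_congr rfl fun i _ => by rw [mul_left_comm, ← exp_add]; ring_nf
  have hexp_x : exp (x 1) = exp (z 1) * exp (x 1 - z 1) := by rw [← exp_add]; ring_nf
  have hexp_two : exp (2 * z 1) = exp (z 1) ^ 2 := by rw [← exp_nat_mul]; ring_nf
  simp only [Pi.one_apply, one_mul, hVz, hVx, hexp_x, hexp_two]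
  linear_combination Q z x * (isShiftOf_bcToda m g x z).toda_identity
end

section
/- Let n ≥ 2 and g_1,…,g_n ∈ ℝ. Define Q : ℝ^n × ℝ^{n−1} → ℝ by Q(x,z) = exp(−(g_1 e^{x_1 + z_1} + Σ_{i=1}^{n−1}(e^{z_i − x_i} + g_{i+1} e^{x_{i+1} − z_i}))). Then for all (x,z): (−(1/2) Σ_{i=1}^{n−1} ∂²/∂z_i² + 2 g_1 e^{2z_1} + Σ_{i=1}^{n−2} g_{i+1} e^{z_{i+1}−z_i}) Q = (−(1/2) Σ_{i=1}^n ∂²/∂x_i² + g_1 g_2 e^{x_1 + x_2} + Σ_{i=1}^{n−1} g_{i+1} e^{x_{i+1}−x_i}) Q. -/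
/-!
Write `Q = exp (-F)`. Each monomial of `F` involves one `z`-coordinate and one `x`-coordinate,
through `exp (± coordinate)`, so along any coordinate line `F = A + B eᵗ + C e⁻ᵗ` and
`∂ᵢ² Q = ((∂ᵢF)² - ∂ᵢ²F) Q`. Hence each Hamiltonian sends `Q` to `Q` times a polynomial in the
monomials `aᵢ = e^{zᵢ-xᵢ}`, `bᵢ = g_{i+1} e^{x_{i+1}-zᵢ}`, `c = g₁ e^{x₁+z₁}`. In both
polynomials the `∂ᵢ²F` add up to `F` and the squares `(∂ᵢF)²` share their diagonal part; the
remaining cross terms `aᵢbᵢ`, `bᵢa_{i+1}`, `ca₁`, `cb₁` differ by exactly the difference of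
the two potentials.
-/

open Finset Real

theorem sum_Icc_one_succ_bot {M : Type*} [AddCommMonoid M] (f : ℕ → M) (m : ℕ) :
    ∑ i ∈ Icc 1 (m + 1), f i = f 1 + ∑ i ∈ Icc 1 m, f (i + 1) := by
  induction m with
  | zero => simp
  | succ m ih => rw [sum_Icc_succ_top (by omega), ih, sum_Icc_succ_top (by omega), add_assoc]

theorem deriv_deriv_exp_neg_exp_add (A B C t : ℝ) :
    deriv (deriv fun s => exp (-(A + B * exp s + C * exp (-s)))) t =
      ((B * exp t - C * exp (-t)) ^ 2 - (B * exp t + C * exp (-t))) *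
        exp (-(A + B * exp t + C * exp (-t))) := by
  have hexp : ∀ s, HasDerivAt (fun s => exp (-s)) (-exp (-s)) s := fun s => by
    simpa using (hasDerivAt_neg s).exp
  have hF : ∀ s, HasDerivAt (fun s => A + B * exp s + C * exp (-s))
      (B * exp s - C * exp (-s)) s := fun s => by
    simpa [sub_eq_add_neg] using
      (((hasDerivAt_exp s).const_mul B).const_add A).fun_add ((hexp s).const_mul C)
  have hF' : ∀ s, HasDerivAt (fun s => B * exp s - C * exp (-s))
      (B * exp s + C * exp (-s)) s := fun s => by
    simpa using ((hasDerivAt_exp s).const_mul B).fun_sub ((hexp s).const_mul C)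
  have h1 : deriv (fun s => exp (-(A + B * exp s + C * exp (-s)))) =
      fun s => -(B * exp s - C * exp (-s)) * exp (-(A + B * exp s + C * exp (-s))) :=
    funext fun s => ((hF s).fun_neg.exp).deriv.trans (mul_comm _ _)
  rw [h1, ((hF' t).fun_neg.fun_mul (hF t).fun_neg.exp).deriv]
  ring

theorem pd2_exp_neg_sum (s : Finset ℕ) (B C p : ℕ → ℝ) {i : ℕ} (hi : i ∈ s) :
    pd2 (fun q => exp (-∑ j ∈ s, (B j * exp (q j) + C j * exp (-q j)))) i p =
      ((B i * exp (p i) - C i * exp (-p i)) ^ 2 - (B i * exp (p i) + C i * exp (-p i))) *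
        exp (-∑ j ∈ s, (B j * exp (p j) + C j * exp (-p j))) := by
  set A := ∑ j ∈ s.erase i, (B j * exp (p j) + C j * exp (-p j))
  have hsplit : ∀ q : ℕ → ℝ, (∀ j ≠ i, q j = p j) → ∑ j ∈ s, (B j * exp (q j) + C j * exp (-q j))
      = A + B i * exp (q i) + C i * exp (-q i) := by
    intro q hq
    rw [← add_sum_erase s _ hi, sum_congr rfl fun j hj => by rw [hq j (ne_of_mem_erase hj)]]
    ring
  have hline : (fun t => exp (-∑ j ∈ s, (B j * exp (Function.update p i t j)
      + C j * exp (-Function.update p i t j))))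
      = fun t => exp (-(A + B i * exp t + C i * exp (-t))) :=
    funext fun t => by
      rw [hsplit _ fun j hj => Function.update_of_ne hj _ _, Function.update_self]
  unfold pd2
  rw [hline, deriv_deriv_exp_neg_exp_add, hsplit p fun _ _ => rfl]

noncomputable def kernelExponent (n : ℕ) (g x z : ℕ → ℝ) : ℝ :=
  g 1 * exp (x 1 + z 1) + ∑ i ∈ Icc 1 (n - 1), (exp (z i - x i) + g (i + 1) * exp (x (i + 1) - z i))

theorem kernelExponent_eq_sum_z {m : ℕ} (hm : 1 ≤ m) (g x z : ℕ → ℝ) :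
    kernelExponent (m + 1) g x z = ∑ j ∈ Icc 1 m,
      ((exp (-x j) + if j = 1 then g 1 * exp (x 1) else 0) * exp (z j)
        + g (j + 1) * exp (x (j + 1)) * exp (-z j)) := by
  simp only [add_mul, ite_mul, zero_mul, sum_add_distrib, sum_ite_eq', mem_Icc, mul_assoc,
    ← exp_add, neg_add_eq_sub, ← sub_eq_add_neg]
  rw [if_pos (by omega), kernelExponent, Nat.add_sub_cancel, sum_add_distrib]
  ring

theorem kernelExponent_eq_sum_x (m : ℕ) (g x z : ℕ → ℝ) :
    kernelExponent (m + 1) g x z = ∑ j ∈ Icc 1 (m + 1),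
      ((if j = 1 then g 1 * exp (z 1) else g j * exp (-z (j - 1))) * exp (x j)
        + (if j ≤ m then exp (z j) else 0) * exp (-x j)) := by
  have hplus : ∑ j ∈ Icc 1 (m + 1),
      (if j = 1 then g 1 * exp (z 1) else g j * exp (-z (j - 1))) * exp (x j) =
      g 1 * exp (x 1 + z 1) + ∑ i ∈ Icc 1 m, g (i + 1) * exp (x (i + 1) - z i) := by
    rw [sum_Icc_one_succ_bot, if_pos rfl]
    refine congrArg₂ _ (by rw [exp_add]; ring) (sum_congr rfl fun i hi => ?_)
    rw [if_neg (by have := mem_Icc.1 hi; omega), Nat.add_sub_cancel, exp_sub, exp_neg]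
    ring
  have hminus : ∑ j ∈ Icc 1 (m + 1), (if j ≤ m then exp (z j) else 0) * exp (-x j) =
      ∑ i ∈ Icc 1 m, exp (z i - x i) := by
    rw [sum_Icc_succ_top (by omega), if_neg (by omega), zero_mul, add_zero]
    refine sum_congr rfl fun i hi => ?_
    rw [if_pos (by have := mem_Icc.1 hi; omega), exp_sub, exp_neg, div_eq_mul_inv]
  rw [sum_add_distrib, hplus, hminus, kernelExponent, Nat.add_sub_cancel, sum_add_distrib]
  ring

/-- `(H^{C_{n-1}} Q) / Q` for `n = k + 2`, in terms of the monomials `aᵢ`, `bᵢ`, `c` of the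
exponent, with the `i = 1` term of `∑ ((∂ᵢF)² - ∂ᵢ²F)` split off; `todaDRatio` is the same for
`H^{D_n}`, with the first and last terms split off. -/
noncomputable def todaCRatio (a b : ℕ → ℝ) (c : ℝ) (k : ℕ) : ℝ :=
  -(1 / 2) * ((a 1 + c - b 1) ^ 2 - (a 1 + c + b 1)
      + ∑ i ∈ Icc 1 k, ((a (i + 1) - b (i + 1)) ^ 2 - (a (i + 1) + b (i + 1))))
    + (2 * c * a 1 + ∑ i ∈ Icc 1 k, b i * a (i + 1))

noncomputable def todaDRatio (a b : ℕ → ℝ) (c : ℝ) (k : ℕ) : ℝ :=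
  -(1 / 2) * ((c - a 1) ^ 2 - (c + a 1)
      + ∑ i ∈ Icc 1 k, ((b i - a (i + 1)) ^ 2 - (b i + a (i + 1))) + (b (k + 1) ^ 2 - b (k + 1)))
    + (c * b 1 + ∑ i ∈ Icc 1 (k + 1), a i * b i)

theorem todaCRatio_eq_todaDRatio (a b : ℕ → ℝ) (c : ℝ) (k : ℕ) :
    todaCRatio a b c k = todaDRatio a b c k := by
  induction k with
  | zero =>
    simp only [todaCRatio, todaDRatio, zero_add, Icc_self, sum_singleton,
      Icc_eq_empty_of_lt zero_lt_one, sum_empty]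
    ring
  | succ k ih =>
    simp only [todaCRatio, todaDRatio] at ih ⊢
    rw [sum_Icc_succ_top (by omega), sum_Icc_succ_top (by omega), sum_Icc_succ_top (by omega),
      sum_Icc_succ_top (by omega : 1 ≤ k + 1 + 1)]
    linear_combination ih

theorem hamiltonianC_kernel_eq_todaCRatio_mul (k : ℕ) (g x z : ℕ → ℝ) :
    -(1 / 2) * ∑ i ∈ Icc 1 (k + 1), pd2 (fun z' => exp (-kernelExponent (k + 2) g x z')) i z
      + (2 * g 1 * exp (2 * z 1) + ∑ i ∈ Icc 1 k, g (i + 1) * exp (z (i + 1) - z i))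
        * exp (-kernelExponent (k + 2) g x z)
    = todaCRatio (fun i => exp (z i - x i)) (fun i => g (i + 1) * exp (x (i + 1) - z i))
        (g 1 * exp (x 1 + z 1)) k * exp (-kernelExponent (k + 2) g x z) := by
  have hB : ∀ j, (exp (-x j) + if j = 1 then g 1 * exp (x 1) else 0) * exp (z j) =
      exp (z j - x j) + if j = 1 then g 1 * exp (x 1 + z 1) else 0 := fun j => by
    split_ifs with hj
    · subst hj; simp only [add_mul, mul_assoc, ← exp_add, neg_add_eq_sub]
    · simp only [add_zero, ← exp_add, neg_add_eq_sub]
  have hC : ∀ j, g (j + 1) * exp (x (j + 1)) * exp (-z j) = g (j + 1) * exp (x (j + 1) - z j) :=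
    fun j => by rw [mul_assoc, ← exp_add, ← sub_eq_add_neg]
  have hE : ∀ z', kernelExponent (k + 2) g x z' = _ :=
    kernelExponent_eq_sum_z (m := k + 1) (by omega) g x
  have hpd2 : ∀ i ∈ Icc 1 (k + 1), pd2 (fun z' => exp (-kernelExponent (k + 2) g x z')) i z =
      (((exp (z i - x i) + if i = 1 then g 1 * exp (x 1 + z 1) else 0)
          - g (i + 1) * exp (x (i + 1) - z i)) ^ 2
        - ((exp (z i - x i) + if i = 1 then g 1 * exp (x 1 + z 1) else 0)
          + g (i + 1) * exp (x (i + 1) - z i))) * exp (-kernelExponent (k + 2) g x z) :=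
    fun i hi => by simp only [hE]; rw [pd2_exp_neg_sum _ _ _ _ hi, hB, hC]
  have hshift : ∀ i ∈ Icc 1 k, (if i + 1 = 1 then g 1 * exp (x 1 + z 1) else 0) = 0 :=
    fun i hi => if_neg (by have := mem_Icc.1 hi; omega)
  have hV₁ : 2 * g 1 * exp (2 * z 1) = 2 * (g 1 * exp (x 1 + z 1)) * exp (z 1 - x 1) := by
    rw [show exp (2 * z 1) = exp (x 1 + z 1) * exp (z 1 - x 1) by rw [← exp_add]; ring_nf]
    ring
  have hV₂ : ∀ i ∈ Icc 1 k, g (i + 1) * exp (z (i + 1) - z i) =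
      g (i + 1) * exp (x (i + 1) - z i) * exp (z (i + 1) - x (i + 1)) :=
    fun i _ => by rw [mul_assoc, ← exp_add]; ring_nf
  rw [sum_congr rfl hpd2, ← sum_mul, sum_Icc_one_succ_bot, if_pos rfl, todaCRatio,
    sum_congr rfl fun i hi => by rw [hshift i hi, add_zero], hV₁, sum_congr rfl hV₂]
  ring

theorem hamiltonianD_kernel_eq_todaDRatio_mul (k : ℕ) (g x z : ℕ → ℝ) :
    -(1 / 2) * ∑ i ∈ Icc 1 (k + 2), pd2 (fun x' => exp (-kernelExponent (k + 2) g x' z)) i x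
      + (g 1 * g 2 * exp (x 1 + x 2) + ∑ i ∈ Icc 1 (k + 1), g (i + 1) * exp (x (i + 1) - x i))
        * exp (-kernelExponent (k + 2) g x z)
    = todaDRatio (fun i => exp (z i - x i)) (fun i => g (i + 1) * exp (x (i + 1) - z i))
        (g 1 * exp (x 1 + z 1)) k * exp (-kernelExponent (k + 2) g x z) := by
  have hP : ∀ j, (if j = 1 then g 1 * exp (z 1) else g j * exp (-z (j - 1))) * exp (x j) =
      if j = 1 then g 1 * exp (x 1 + z 1) else g j * exp (x j - z (j - 1)) := fun j => by
    split_ifs with hj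
    · subst hj; rw [mul_assoc, ← exp_add, add_comm]
    · rw [mul_assoc, ← exp_add, neg_add_eq_sub]
  have hM : ∀ j, (if j ≤ k + 1 then exp (z j) else 0) * exp (-x j) =
      if j ≤ k + 1 then exp (z j - x j) else 0 := fun j => by
    split_ifs
    · rw [← exp_add, ← sub_eq_add_neg]
    · rw [zero_mul]
  have hE : ∀ x', kernelExponent (k + 2) g x' z = _ :=
    fun x' => kernelExponent_eq_sum_x (k + 1) g x' z
  have hpd2 : ∀ i ∈ Icc 1 (k + 2), pd2 (fun x' => exp (-kernelExponent (k + 2) g x' z)) i x =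
      (((if i = 1 then g 1 * exp (x 1 + z 1) else g i * exp (x i - z (i - 1)))
          - if i ≤ k + 1 then exp (z i - x i) else 0) ^ 2
        - ((if i = 1 then g 1 * exp (x 1 + z 1) else g i * exp (x i - z (i - 1)))
          + if i ≤ k + 1 then exp (z i - x i) else 0)) * exp (-kernelExponent (k + 2) g x z) :=
    fun i hi => by simp only [hE]; rw [pd2_exp_neg_sum _ _ _ _ hi, hP, hM]
  have hP_shift : ∀ i ∈ Icc 1 k,
      (if i + 1 = 1 then g 1 * exp (x 1 + z 1) else g (i + 1) * exp (x (i + 1) - z (i + 1 - 1)))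
        = g (i + 1) * exp (x (i + 1) - z i) :=
    fun i hi => by rw [if_neg (by have := mem_Icc.1 hi; omega), Nat.add_sub_cancel]
  have hM_shift : ∀ i ∈ Icc 1 k,
      (if i + 1 ≤ k + 1 then exp (z (i + 1) - x (i + 1)) else 0) = exp (z (i + 1) - x (i + 1)) :=
    fun i hi => if_pos (by have := mem_Icc.1 hi; omega)
  have hV₁ : g 1 * g 2 * exp (x 1 + x 2) = g 1 * exp (x 1 + z 1) * (g 2 * exp (x 2 - z 1)) := by
    rw [show exp (x 1 + x 2) = exp (x 1 + z 1) * exp (x 2 - z 1) by rw [← exp_add]; ring_nf]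
    ring
  have hV₂ : ∀ i ∈ Icc 1 (k + 1), g (i + 1) * exp (x (i + 1) - x i) =
      exp (z i - x i) * (g (i + 1) * exp (x (i + 1) - z i)) := fun i _ => by
    rw [mul_left_comm, ← exp_add]; ring_nf
  rw [sum_congr rfl hpd2, ← sum_mul, sum_Icc_one_succ_bot, sum_Icc_succ_top (by omega),
    sum_congr rfl fun i hi => by rw [hP_shift i hi, hM_shift i hi], if_pos rfl,
    if_pos (by omega), if_neg (by omega), if_neg (by omega), Nat.add_sub_cancel, todaDRatio,
    hV₁, sum_congr rfl hV₂]
  ring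

/-- The kernel `Q(x,z) = exp(−(g_1 e^{x_1+z_1} + Σ_{i=1}^{n−1}(e^{z_i−x_i} + g_{i+1} e^{x_{i+1}−z_i})))`
intertwines the quadratic Hamiltonians of the `C_{n−1}` (in `z`) and `D_n` (in `x`) Toda chains. -/
theorem stmt_5 (n : ℕ) (hn : 2 ≤ n) (g : ℕ → ℝ) :
    let Q : (ℕ → ℝ) → (ℕ → ℝ) → ℝ := fun x z =>
      Real.exp (-(g 1 * Real.exp (x 1 + z 1)
        + ∑ i ∈ Finset.Icc 1 (n - 1),
            (Real.exp (z i - x i) + g (i + 1) * Real.exp (x (i + 1) - z i))))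
    ∀ x z : ℕ → ℝ,
      -(1 / 2) * (∑ i ∈ Finset.Icc 1 (n - 1), pd2 (fun z' => Q x z') i z)
          + (2 * g 1 * Real.exp (2 * z 1)
              + ∑ i ∈ Finset.Icc 1 (n - 2), g (i + 1) * Real.exp (z (i + 1) - z i)) * Q x z
        = -(1 / 2) * (∑ i ∈ Finset.Icc 1 n, pd2 (fun x' => Q x' z) i x)
          + (g 1 * g 2 * Real.exp (x 1 + x 2)
              + ∑ i ∈ Finset.Icc 1 (n - 1), g (i + 1) * Real.exp (x (i + 1) - x i)) * Q x z := by
  intro Q x z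
  obtain ⟨k, rfl⟩ : ∃ k, n = k + 2 := ⟨n - 2, by omega⟩
  have hQ : Q = fun x z => exp (-kernelExponent (k + 2) g x z) := rfl
  rw [hQ, show k + 2 - 1 = k + 1 by omega, show k + 2 - 2 = k by omega,
    hamiltonianC_kernel_eq_todaCRatio_mul, hamiltonianD_kernel_eq_todaDRatio_mul,
    todaCRatio_eq_todaDRatio]
end

section
/- Let n ≥ 2, g_1 ∈ ℝ, g_2 > 0, g_3,…,g_{n+1} ∈ ℝ, and set c = g_1/√(2 g_2). Define, for x ∈ ℝ^n and z ∈ ℝ^n with z_1 < 0, Q(x,z) = ((1−e^{z_1})/(1+e^{z_1}))^{c} · exp(−(√(g_2/2)(e^{x_1+z_1} + e^{x_1−z_1}) + Σ_{i=2}^{n}(g_{i+1} e^{z_i − x_{i−1}} + e^{x_i − z_i}))). Then H^{BC_n}(x) Q = H^{I*_n}(z) Q pointwise on {z_1 < 0}, where H^{BC_n}(x) = −(1/2)Σ_{i=1}^n ∂²/∂x_i² + g_1 e^{x_1} + g_2 e^{2x_1} + Σ_{i=1}^{n−1} g_{i+2} e^{x_{i+1}−x_i}, and H^{I*_n}(z)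 = −(1/2)Σ_{i=1}^n ∂²/∂z_i² − c/(e^{−z_1/2} − e^{z_1/2})² + 2c(c+1)/(e^{−z_1} − e^{z_1})² + g_3 √(g_2/2)(e^{z_1+z_2} + e^{z_2−z_1}) + Σ_{i=2}^{n−1} g_{i+2} e^{z_{i+1}−z_i}. -/
open Real Finset Filter Topology Function

noncomputable section

def expPair (A B t : ℝ) : ℝ := A * exp t + B * exp (-t)

lemma hasDerivAt_expPair (A B t : ℝ) : HasDerivAt (expPair A B) (expPair A (-B) t) t := by
  refine (((hasDerivAt_exp t).const_mul A).add
    ((hasDerivAt_neg t).exp.const_mul B)).congr_deriv ?_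
  simp only [expPair]
  ring

lemma deriv_deriv_const_mul_exp_comp {ψ ψ' : ℝ → ℝ} {ψ'' s : ℝ} (K : ℝ)
    (h₁ : ∀ᶠ t in 𝓝 s, HasDerivAt ψ (ψ' t) t) (h₂ : HasDerivAt ψ' ψ'' s) :
    deriv (deriv fun t => K * exp (ψ t)) s = (ψ' s ^ 2 + ψ'') * (K * exp (ψ s)) := by
  have hd : deriv (fun t => exp (ψ t)) =ᶠ[𝓝 s] fun t => exp (ψ t) * ψ' t :=
    h₁.mono fun t ht => ht.exp.deriv
  simp only [deriv_const_mul_field']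
  rw [hd.deriv_eq, show deriv (fun t => exp (ψ t) * ψ' t) s = _ from
    (h₁.self_of_nhds.exp.mul h₂).deriv]
  ring

lemma pd2_eq_of_eventually_eq_const_mul_exp {f : (ℕ → ℝ) → ℝ} {y : ℕ → ℝ} {i : ℕ}
    {ψ ψ' : ℝ → ℝ} {ψ'' K : ℝ}
    (hf : (fun t => f (update y i t)) =ᶠ[𝓝 (y i)] fun t => K * exp (ψ t))
    (h₁ : ∀ᶠ t in 𝓝 (y i), HasDerivAt ψ (ψ' t) t) (h₂ : HasDerivAt ψ' ψ'' (y i)) :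
    pd2 f i y = (ψ' (y i) ^ 2 + ψ'') * f y := by
  have hfy : f y = K * exp (ψ (y i)) := by simpa using hf.self_of_nhds
  rw [pd2, hf.deriv.deriv_eq, deriv_deriv_const_mul_exp_comp K h₁ h₂, hfy]

lemma hasDerivAt_log_one_sub_exp_div_one_add_exp {t : ℝ} (ht : t ≠ 0) :
    HasDerivAt (fun s => log ((1 - exp s) / (1 + exp s))) (sinh t)⁻¹ t := by
  have hp : 1 + exp t ≠ 0 := by positivity
  have hm : 1 - exp t ≠ 0 := fun h => ht (exp_eq_one_iff t |>.mp (by linarith))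
  refine ((((hasDerivAt_exp t).const_sub 1).div ((hasDerivAt_exp t).const_add 1) hp).log
    (div_ne_zero hm hp)).congr_deriv ?_
  simp only [Pi.div_apply]
  have hsq : exp t ^ 2 - 1 ≠ 0 := by
    rw [show exp t ^ 2 - 1 = -((1 - exp t) * (1 + exp t)) by ring]
    exact neg_ne_zero.mpr (mul_ne_zero hm hp)
  rw [sinh_eq, exp_neg]
  field_simp
  ring

def expSum (s : Finset ℕ) (A B : ℕ → ℝ) (y : ℕ → ℝ) : ℝ := ∑ j ∈ s, expPair (A j) (B j) (y j)

lemma expSum_update {s : Finset ℕ} {i : ℕ} (hi : i ∈ s) (A B y : ℕ → ℝ) (t : ℝ) :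
    expSum s A B (update y i t) = expPair (A i) (B i) t + expSum (s.erase i) A B y := by
  rw [expSum, ← add_sum_erase s _ hi, update_self, expSum]
  congr 1
  exact sum_congr rfl fun j hj => by rw [update_of_ne (ne_of_mem_erase hj)]

lemma pd2_const_mul_exp_neg_expSum {f : (ℕ → ℝ) → ℝ} {s : Finset ℕ} {A B y : ℕ → ℝ} {i : ℕ}
    {K : ℝ} (hi : i ∈ s) (hf : ∀ t, f (update y i t) = K * exp (-expSum s A B (update y i t))) :
    pd2 f i y = (expPair (A i) (-B i) (y i) ^ 2 - expPair (A i) (B i) (y i)) * f y := by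
  simp only [expSum_update hi] at hf
  have h₁ (t : ℝ) : HasDerivAt (fun t => -(expPair (A i) (B i) t + expSum (s.erase i) A B y))
      (-expPair (A i) (-B i) t) t :=
    ((hasDerivAt_expPair _ _ t).add_const _).neg
  have h₂ := (hasDerivAt_expPair (A i) (-B i) (y i)).neg
  rw [pd2_eq_of_eventually_eq_const_mul_exp (Eventually.of_forall hf)
    (Eventually.of_forall h₁) h₂, neg_neg]
  ring

lemma pd2_rpow_mul_exp_neg_expSum {f : (ℕ → ℝ) → ℝ} {s : Finset ℕ} {A B y : ℕ → ℝ} {i : ℕ}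
    {c : ℝ} (hi : i ∈ s) (hy : y i < 0)
    (hf : ∀ t, f (update y i t)
      = ((1 - exp t) / (1 + exp t)) ^ c * exp (-expSum s A B (update y i t))) :
    pd2 f i y = ((c * (sinh (y i))⁻¹ - expPair (A i) (-B i) (y i)) ^ 2
      - c * cosh (y i) / sinh (y i) ^ 2 - expPair (A i) (B i) (y i)) * f y := by
  simp only [expSum_update hi] at hf
  set ψ := fun t =>
    c * log ((1 - exp t) / (1 + exp t)) - (expPair (A i) (B i) t + expSum (s.erase i) A B y)
  have hψ : (fun t => f (update y i t)) =ᶠ[𝓝 (y i)] fun t => 1 * exp (ψ t) := by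
    filter_upwards [Iio_mem_nhds hy] with t ht
    have hP : 0 < (1 - exp t) / (1 + exp t) :=
      div_pos (by linarith [exp_lt_one_iff.mpr (show t < 0 from ht)]) (by positivity)
    rw [hf, rpow_def_of_pos hP, one_mul, ← exp_add]
    congr 1
    simp only [ψ]
    ring
  have h₁ : ∀ᶠ t in 𝓝 (y i), HasDerivAt ψ (c * (sinh t)⁻¹ - expPair (A i) (-B i) t) t := by
    filter_upwards [Iio_mem_nhds hy] with t ht
    exact ((hasDerivAt_log_one_sub_exp_div_one_add_exp (ne_of_lt ht)).const_mul c).sub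
      ((hasDerivAt_expPair _ _ t).add_const _)
  have h₂ := (((hasDerivAt_sinh (y i)).inv (sinh_ne_zero.mpr hy.ne)).const_mul c).sub
    (hasDerivAt_expPair (A i) (-B i) (y i))
  rw [pd2_eq_of_eventually_eq_const_mul_exp hψ h₁ h₂, neg_neg]
  ring

lemma sum_Icc_add_one {M : Type*} [AddCommMonoid M] (f : ℕ → M) (a b : ℕ) :
    ∑ i ∈ Icc a b, f (i + 1) = ∑ i ∈ Icc (a + 1) (b + 1), f i := by
  rw [← map_add_right_Icc, sum_map]
  rfl

lemma sum_Icc_eq_add_sum_Icc_add_one {M : Type*} [AddCommMonoid M] (f : ℕ → M) {a b : ℕ}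
    (h : a ≤ b) : ∑ i ∈ Icc a b, f i = f a + ∑ i ∈ Icc (a + 1) b, f i := by
  rw [Icc_add_one_left_eq_Ioc, add_sum_Ioc_eq_sum_Icc h]

lemma sum_sq_chain_sub_sum_sq (U W : ℕ → ℝ) {n : ℕ} (hn : 2 ≤ n) :
    ∑ i ∈ Icc 2 (n - 1), (U i - W (i + 1)) ^ 2 + U n ^ 2 + W 2 ^ 2
        - ∑ i ∈ Icc 2 n, (W i - U i) ^ 2
      = 2 * ∑ i ∈ Icc 2 n, U i * W i - 2 * ∑ i ∈ Icc 2 (n - 1), U i * W (i + 1) := by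
  obtain ⟨m, rfl⟩ : ∃ m, n = m + 2 := ⟨n - 2, by omega⟩
  rw [show m + 2 - 1 = m + 1 by omega]
  induction m with
  | zero => norm_num; ring
  | succ m ih =>
    have h₁ : 2 ≤ m + 1 + 1 := by omega
    have h₂ : 2 ≤ m + 2 + 1 := by omega
    rw [show m + 1 + 2 = m + 2 + 1 by ring, sum_Icc_succ_top h₂ fun i => (W i - U i) ^ 2,
      sum_Icc_succ_top h₂ fun i => U i * W i, sum_Icc_succ_top h₁ fun i => (U i - W (i + 1)) ^ 2,
      sum_Icc_succ_top h₁ fun i => U i * W (i + 1)]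
    linear_combination ih (by omega)

def diagTerm (x z : ℕ → ℝ) (i : ℕ) : ℝ := exp (x i - z i)

def offDiagTerm (g x z : ℕ → ℝ) (i : ℕ) : ℝ := g (i + 1) * exp (z i - x (i - 1))

def todaExponent (g : ℕ → ℝ) (n : ℕ) (x z : ℕ → ℝ) : ℝ :=
  √(g 2 / 2) * (exp (x 1 + z 1) + exp (x 1 - z 1))
    + ∑ i ∈ Icc 2 n, (g (i + 1) * exp (z i - x (i - 1)) + exp (x i - z i))

/- `todaExponent` regrouped as `∑ᵢ (aᵢ e^{xᵢ} + bᵢ e^{-xᵢ})` with coefficients depending only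
on `z`, and as `∑ᵢ (aᵢ' e^{zᵢ} + bᵢ' e^{-zᵢ})` with coefficients depending only on `x`. -/
def xCoeffPos (g z : ℕ → ℝ) (i : ℕ) : ℝ :=
  if i = 1 then √(g 2 / 2) * (exp (z 1) + exp (-z 1)) else exp (-z i)

def xCoeffNeg (g : ℕ → ℝ) (n : ℕ) (z : ℕ → ℝ) (i : ℕ) : ℝ :=
  if i < n then g (i + 2) * exp (z (i + 1)) else 0

def zCoeffPos (g x : ℕ → ℝ) (i : ℕ) : ℝ :=
  if i = 1 then √(g 2 / 2) * exp (x 1) else g (i + 1) * exp (-x (i - 1))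

def zCoeffNeg (g x : ℕ → ℝ) (i : ℕ) : ℝ :=
  if i = 1 then √(g 2 / 2) * exp (x 1) else exp (x i)

variable {g x z : ℕ → ℝ} {n : ℕ}

lemma expSum_xCoeff_eq_todaExponent (hn : 1 ≤ n) :
    expSum (Icc 1 n) (xCoeffPos g z) (xCoeffNeg g n z) x = todaExponent g n x z := by
  obtain ⟨m, rfl⟩ : ∃ m, n = m + 1 := ⟨n - 1, by omega⟩
  have hneg : ∑ i ∈ Icc 1 (m + 1), xCoeffNeg g (m + 1) z i * exp (-x i)
      = ∑ i ∈ Icc 2 (m + 1), g (i + 1) * exp (z i - x (i - 1)) := by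
    rw [sum_Icc_succ_top (by omega), ← sum_Icc_add_one]
    simp only [xCoeffNeg, lt_irrefl, if_false, zero_mul, add_zero, add_tsub_cancel_right,
      exp_sub, exp_neg]
    exact sum_congr rfl fun i hi => by
      rw [if_pos (by grind)]
      ring
  have hpos : ∑ i ∈ Icc 1 (m + 1), xCoeffPos g z i * exp (x i)
      = √(g 2 / 2) * (exp (x 1 + z 1) + exp (x 1 - z 1))
        + ∑ i ∈ Icc 2 (m + 1), exp (x i - z i) := by
    rw [sum_Icc_eq_add_sum_Icc_add_one _ (by omega)]
    congr 1
    · simp only [xCoeffPos, if_true, exp_add, exp_sub, exp_neg]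
      ring
    · exact sum_congr rfl fun i hi => by
        rw [xCoeffPos, if_neg (by grind), exp_sub, exp_neg]
        ring
  simp only [expSum, expPair, sum_add_distrib, hneg, hpos, todaExponent]
  ring

lemma expSum_zCoeff_eq_todaExponent (hn : 1 ≤ n) :
    expSum (Icc 1 n) (zCoeffPos g x) (zCoeffNeg g x) z = todaExponent g n x z := by
  rw [expSum, sum_Icc_eq_add_sum_Icc_add_one _ hn, todaExponent]
  congr 1
  · simp only [zCoeffPos, zCoeffNeg, expPair, if_true, exp_add, exp_sub, exp_neg]
    ring
  · exact sum_congr rfl fun i hi => by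
      have hi1 : i ≠ 1 := by grind
      simp only [zCoeffPos, zCoeffNeg, expPair, hi1, if_false, exp_sub, exp_neg]
      ring

def xGrad (g : ℕ → ℝ) (n : ℕ) (x z : ℕ → ℝ) (i : ℕ) : ℝ :=
  expPair (xCoeffPos g z i) (-xCoeffNeg g n z i) (x i)

def zGrad (g x z : ℕ → ℝ) (i : ℕ) : ℝ :=
  expPair (zCoeffPos g x i) (-zCoeffNeg g x i) (z i)

lemma xGrad_one (hn : 1 < n) :
    xGrad g n x z 1
      = √(g 2 / 2) * (exp (x 1 + z 1) + exp (x 1 - z 1)) - offDiagTerm g x z 2 := by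
  simp only [xGrad, expPair, xCoeffPos, xCoeffNeg, offDiagTerm, if_true, if_pos hn,
    Nat.reduceAdd, Nat.reduceSub, exp_add, exp_sub, exp_neg]
  ring

lemma xGrad_of_lt {i : ℕ} (hi : i ≠ 1) (hin : i < n) :
    xGrad g n x z i = diagTerm x z i - offDiagTerm g x z (i + 1) := by
  simp only [xGrad, expPair, xCoeffPos, xCoeffNeg, diagTerm, offDiagTerm, hi, hin, if_true,
    if_false, add_tsub_cancel_right, exp_sub, exp_neg]
  ring

lemma xGrad_self (hn : n ≠ 1) : xGrad g n x z n = diagTerm x z n := by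
  simp only [xGrad, expPair, xCoeffPos, xCoeffNeg, diagTerm, hn, lt_irrefl, if_false, exp_sub,
    exp_neg]
  ring

lemma zGrad_one : zGrad g x z 1 = √(g 2 / 2) * (exp (x 1 + z 1) - exp (x 1 - z 1)) := by
  simp only [zGrad, expPair, zCoeffPos, zCoeffNeg, if_true, exp_add, exp_sub, exp_neg]
  ring

lemma zGrad_of_ne_one {i : ℕ} (hi : i ≠ 1) :
    zGrad g x z i = offDiagTerm g x z i - diagTerm x z i := by
  simp only [zGrad, expPair, zCoeffPos, zCoeffNeg, diagTerm, offDiagTerm, hi, if_false, exp_sub,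
    exp_neg]
  ring

lemma sum_sq_xGrad (hn : 2 ≤ n) :
    ∑ i ∈ Icc 1 n, xGrad g n x z i ^ 2 = xGrad g n x z 1 ^ 2
      + ∑ i ∈ Icc 2 (n - 1), (diagTerm x z i - offDiagTerm g x z (i + 1)) ^ 2
      + diagTerm x z n ^ 2 := by
  obtain ⟨m, rfl⟩ : ∃ m, n = m + 1 := ⟨n - 1, by omega⟩
  rw [sum_Icc_succ_top (by omega), sum_Icc_eq_add_sum_Icc_add_one _ (by omega : 1 ≤ m),
    one_add_one_eq_two, xGrad_self (by omega), add_tsub_cancel_right]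
  congr 2
  exact sum_congr rfl fun i hi => by rw [xGrad_of_lt (by grind) (by grind)]

lemma sum_sq_zGrad (hn : 1 ≤ n) :
    ∑ i ∈ Icc 1 n, zGrad g x z i ^ 2
      = zGrad g x z 1 ^ 2 + ∑ i ∈ Icc 2 n, (offDiagTerm g x z i - diagTerm x z i) ^ 2 := by
  rw [sum_Icc_eq_add_sum_Icc_add_one _ hn, one_add_one_eq_two]
  exact congrArg _ (sum_congr rfl fun i hi => by rw [zGrad_of_ne_one (by grind)])

lemma diagTerm_mul_offDiagTerm (i : ℕ) :
    diagTerm x z i * offDiagTerm g x z i = g (i + 1) * exp (x i - x (i - 1)) := by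
  rw [diagTerm, offDiagTerm, mul_left_comm, ← exp_add]
  ring_nf

lemma diagTerm_mul_offDiagTerm_add_one (i : ℕ) :
    diagTerm x z i * offDiagTerm g x z (i + 1) = g (i + 2) * exp (z (i + 1) - z i) := by
  rw [diagTerm, offDiagTerm, mul_left_comm, ← exp_add, add_tsub_cancel_right]
  ring_nf

lemma sum_sq_xGrad_sub_sum_sq_zGrad (hn : 2 ≤ n) (hg : 0 ≤ g 2) :
    ∑ i ∈ Icc 1 n, xGrad g n x z i ^ 2 - ∑ i ∈ Icc 1 n, zGrad g x z i ^ 2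
      = 2 * g 2 * exp (2 * x 1)
        - 2 * g 3 * √(g 2 / 2) * (exp (z 1 + z 2) + exp (z 2 - z 1))
        + 2 * ∑ i ∈ Icc 1 (n - 1), g (i + 2) * exp (x (i + 1) - x i)
        - 2 * ∑ i ∈ Icc 2 (n - 1), g (i + 2) * exp (z (i + 1) - z i) := by
  have hchain := sum_sq_chain_sub_sum_sq (diagTerm x z) (offDiagTerm g x z) hn
  have hshift : ∑ i ∈ Icc 2 n, g (i + 1) * exp (x i - x (i - 1))
      = ∑ i ∈ Icc 1 (n - 1), g (i + 2) * exp (x (i + 1) - x i) := by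
    rw [show Icc 2 n = Icc (1 + 1) (n - 1 + 1) by congr 1; omega, ← sum_Icc_add_one]
    exact sum_congr rfl fun i _ => by rw [add_tsub_cancel_right, add_assoc]
  have hW2 : (exp (x 1 + z 1) + exp (x 1 - z 1)) * offDiagTerm g x z 2
      = g 3 * (exp (z 1 + z 2) + exp (z 2 - z 1)) := by
    simp only [offDiagTerm, Nat.reduceAdd, Nat.reduceSub, exp_add, exp_sub]
    field_simp
  have hprod : exp (x 1 + z 1) * exp (x 1 - z 1) = exp (2 * x 1) := by
    rw [← exp_add]
    ring_nf
  have hsq : √(g 2 / 2) ^ 2 = g 2 / 2 := sq_sqrt (by linarith)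
  simp only [diagTerm_mul_offDiagTerm, diagTerm_mul_offDiagTerm_add_one, hshift] at hchain
  rw [sum_sq_xGrad hn, sum_sq_zGrad (by omega), xGrad_one (by omega), zGrad_one]
  linear_combination hchain - 2 * √(g 2 / 2) * hW2
    + 4 * exp (x 1 + z 1) * exp (x 1 - z 1) * hsq + 2 * g 2 * hprod

lemma inozemtsev_boundary_potential_eq (c : ℝ) {t : ℝ} (ht : t ≠ 0) :
    -c / (exp (-t / 2) - exp (t / 2)) ^ 2 + 2 * c * (c + 1) / (exp (-t) - exp t) ^ 2
      = (c ^ 2 - c * cosh t) / (2 * sinh t ^ 2) := by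
  have hsq : exp t = exp (t / 2) ^ 2 := by rw [← exp_nat_mul]; ring_nf
  rw [show -t / 2 = -(t / 2) by ring, sinh_eq, cosh_eq]
  simp only [exp_neg, hsq]
  have hu : exp (t / 2) ^ 2 ≠ 1 := hsq ▸ fun h => ht (exp_eq_one_iff t |>.mp h)
  have hu₀ : exp (t / 2) ≠ 0 := (exp_pos _).ne'
  generalize exp (t / 2) = u at hu hu₀ ⊢
  have h₁ : 1 - u ^ 2 ≠ 0 := sub_ne_zero.mpr (Ne.symm hu)
  have h₂ : 1 - u ^ 4 ≠ 0 := by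
    rw [show 1 - u ^ 4 = (1 - u ^ 2) * (1 + u ^ 2) by ring]
    exact mul_ne_zero h₁ (by positivity)
  have h₃ : u ^ 4 - 1 ≠ 0 := by rw [← neg_sub]; exact neg_ne_zero.mpr h₂
  field_simp
  ring

def todaKernel (g : ℕ → ℝ) (n : ℕ) (c : ℝ) (x z : ℕ → ℝ) : ℝ :=
  ((1 - exp (z 1)) / (1 + exp (z 1))) ^ c * exp (-todaExponent g n x z)

lemma sum_pd2_todaKernel_x {c : ℝ} (hn : 1 ≤ n) :
    ∑ i ∈ Icc 1 n, pd2 (fun x' => todaKernel g n c x' z) i x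
      = (∑ i ∈ Icc 1 n, xGrad g n x z i ^ 2 - todaExponent g n x z) * todaKernel g n c x z := by
  rw [← expSum_xCoeff_eq_todaExponent hn, expSum, ← sum_sub_distrib, sum_mul]
  exact sum_congr rfl fun i hi => pd2_const_mul_exp_neg_expSum hi fun t => by
    rw [todaKernel, expSum_xCoeff_eq_todaExponent hn]

lemma sum_pd2_todaKernel_z {c : ℝ} (hn : 1 ≤ n) (hz : z 1 < 0) :
    ∑ i ∈ Icc 1 n, pd2 (fun z' => todaKernel g n c x z') i z
      = (∑ i ∈ Icc 1 n, zGrad g x z i ^ 2 - todaExponent g n x z + c ^ 2 / sinh (z 1) ^ 2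
          - 2 * (c / sinh (z 1) * zGrad g x z 1)
          - c * cosh (z 1) / sinh (z 1) ^ 2) * todaKernel g n c x z := by
  have hK (t : ℝ) : todaKernel g n c x (update z 1 t) = ((1 - exp t) / (1 + exp t)) ^ c
      * exp (-expSum (Icc 1 n) (zCoeffPos g x) (zCoeffNeg g x) (update z 1 t)) := by
    rw [todaKernel, expSum_zCoeff_eq_todaExponent hn, update_self]
  have hK' : ∀ i ∈ Icc 2 n, ∀ t, todaKernel g n c x (update z i t)
      = ((1 - exp (z 1)) / (1 + exp (z 1))) ^ c
        * exp (-expSum (Icc 1 n) (zCoeffPos g x) (zCoeffNeg g x) (update z i t)) := by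
    intro i hi t
    rw [todaKernel, expSum_zCoeff_eq_todaExponent hn, update_of_ne (by grind)]
  rw [sum_Icc_eq_add_sum_Icc_add_one _ hn, one_add_one_eq_two,
    pd2_rpow_mul_exp_neg_expSum (mem_Icc.mpr ⟨le_rfl, hn⟩) hz hK,
    sum_congr rfl fun i hi => pd2_const_mul_exp_neg_expSum (by grind) (hK' i hi),
    ← expSum_zCoeff_eq_todaExponent hn, expSum, sum_Icc_eq_add_sum_Icc_add_one _ hn,
    sum_Icc_eq_add_sum_Icc_add_one _ hn, one_add_one_eq_two, ← sum_mul, sum_sub_distrib]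
  simp only [zGrad]
  ring

lemma div_sinh_mul_zGrad_one (hg2 : 0 < g 2) {c : ℝ} (hc : c = g 1 / √(2 * g 2))
    (hz : z 1 ≠ 0) : c / sinh (z 1) * zGrad g x z 1 = g 1 * exp (x 1) := by
  have h2 : √(2 * g 2) = 2 * √(g 2 / 2) := by
    rw [show 2 * g 2 = 2 ^ 2 * (g 2 / 2) by ring, sqrt_mul (by positivity), sqrt_sq zero_le_two]
  have hZ : zGrad g x z 1 = 2 * √(g 2 / 2) * exp (x 1) * sinh (z 1) := by
    rw [zGrad_one, sinh_eq, exp_add, exp_sub, exp_neg]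
    ring
  rw [hZ, hc, h2]
  field_simp

end

/-- The kernel `Q(x,z) = ((1−e^{z_1})/(1+e^{z_1}))^c ·
exp(−(√(g_2/2)(e^{x_1+z_1}+e^{x_1−z_1}) + Σ_{i=2}^{n}(g_{i+1} e^{z_i−x_{i−1}} + e^{x_i−z_i})))`
with `c = g_1/√(2g_2)` intertwines the quadratic Hamiltonians of the `BC_n` Toda chain and the
specialized Inozemtsev `I*_n` Toda chain, pointwise on `{z_1 < 0}`. -/
theorem stmt_6 (n : ℕ) (hn : 2 ≤ n) (g : ℕ → ℝ) (hg2 : 0 < g 2)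
    (c : ℝ) (hc : c = g 1 / Real.sqrt (2 * g 2)) :
    let Q : (ℕ → ℝ) → (ℕ → ℝ) → ℝ := fun x z =>
      Real.rpow ((1 - Real.exp (z 1)) / (1 + Real.exp (z 1))) c *
      Real.exp (-(Real.sqrt (g 2 / 2) * (Real.exp (x 1 + z 1) + Real.exp (x 1 - z 1))
        + ∑ i ∈ Finset.Icc 2 n,
            (g (i + 1) * Real.exp (z i - x (i - 1)) + Real.exp (x i - z i))))
    ∀ x z : ℕ → ℝ, z 1 < 0 →
      -(1 / 2) * (∑ i ∈ Finset.Icc 1 n, pd2 (fun x' => Q x' z) i x)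
          + (g 1 * Real.exp (x 1) + g 2 * Real.exp (2 * x 1)
              + ∑ i ∈ Finset.Icc 1 (n - 1), g (i + 2) * Real.exp (x (i + 1) - x i)) * Q x z
        = -(1 / 2) * (∑ i ∈ Finset.Icc 1 n, pd2 (fun z' => Q x z') i z)
          + (-c / (Real.exp (-z 1 / 2) - Real.exp (z 1 / 2)) ^ 2
              + 2 * c * (c + 1) / (Real.exp (-z 1) - Real.exp (z 1)) ^ 2
              + g 3 * Real.sqrt (g 2 / 2) * (Real.exp (z 1 + z 2) + Real.exp (z 2 - z 1))
              + ∑ i ∈ Finset.Icc 2 (n - 1), g (i + 2) * Real.exp (z (i + 1) - z i)) * Q x z := by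
  intro Q x z hz
  have hQ : ∀ x' z', Q x' z' = todaKernel g n c x' z' := fun _ _ => rfl
  simp only [hQ]
  rw [sum_pd2_todaKernel_x (by omega), sum_pd2_todaKernel_z (by omega) hz,
    inozemtsev_boundary_potential_eq c hz.ne]
  have hgrad := sum_sq_xGrad_sub_sum_sq_zGrad (x := x) (z := z) hn hg2.le
  have hcross := div_sinh_mul_zGrad_one (x := x) hg2 hc hz.ne
  linear_combination (-(1 / 2) * hgrad - hcross) * todaKernel g n c x z
end
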